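/- Every root is either positive or negative: Φ = Φ⁺ ⊎ Φ⁻ (disjoint union). -/

import Mathlib

/-!
Write a root as `x = w a` with `a ∈ Π`. The key claim is that `ℓ(w s_a) ≥ ℓ(w)` forces
`w a ∈ PLC(Π)`; otherwise the claim applies to `w s_a`, which sends `a` to `-x`. It is proved by
induction on `ℓ(w)` (Humphreys, *Reflection groups and Coxeter groups*, Thm. 5.4): pick a simple
reflection `s_b` shortening `w` and factor `w = u v` with `v` in the dihedral group `⟨s_a, s_b⟩`,
`ℓ(w) = ℓ(u) + ℓ_{a,b}(v)`, and `u` shortened by neither `s_a` nor `s_b`. By induction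
`u a, u b ∈ PLC(Π)`, and a rank-two computation shows that `v a` is a nonnegative combination of
`a` and `b`: its coefficients are the values `U_{n-1}(γ), U_n(γ)` of Chebyshev polynomials at
`γ = -B(a, b)`, where `n = ℓ_{a,b}(v)`. They are nonnegative either because `γ ≥ 1`, or because
`γ = cos(π/m)` and the braid relation of length `m` forces `n < m`. Disjointness is `0 ∉ PLC(Π)`.
-/

open Real

variable {V : Type*} [AddCommGroup V] [Module ℝ V]

/-- The set of positive linear combinations of a set `A`. -/
def PLC (A : Set V) : Set V :=
  {v | ∃ (s : Finset V) (c : V → ℝ), (↑s : Set V) ⊆ A ∧ (∀ x ∈ s, 0 ≤ c x) ∧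
    (∃ x ∈ s, 0 < c x) ∧ v = ∑ x ∈ s, c x • x}

/-- A Coxeter datum (Krammer): a root basis `Pi` in `V` with bilinear form `B`. -/
structure CoxeterDatum (V : Type*) [AddCommGroup V] [Module ℝ V] where
  B : LinearMap.BilinForm ℝ V
  Pi : Set V
  norm_one : ∀ a ∈ Pi, B a a = 1
  symm : ∀ a ∈ Pi, ∀ b ∈ Pi, B a b = B b a
  offdiag : ∀ a ∈ Pi, ∀ b ∈ Pi, a ≠ b →
    (∃ m : ℕ, 2 ≤ m ∧ B a b = -Real.cos (Real.pi / m)) ∨ B a b ≤ -1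
  zero_not_plc : (0 : V) ∉ PLC Pi

namespace CoxeterDatum

variable (D : CoxeterDatum V)

/-- The reflection in the vector `a`, as a linear endomorphism of `V`. -/
noncomputable def refl (a : V) : Module.End ℝ V where
  toFun x := x - (2 * D.B x a) • a
  map_add' x y := by simp only [map_add, LinearMap.add_apply]; module
  map_smul' c x := by simp only [map_smul, LinearMap.smul_apply, smul_eq_mul,
    RingHom.id_apply]; module

/-- The set of simple reflections, as invertible endomorphisms of `V`. -/
def simples : Set (Module.End ℝ V)ˣ :=
  {u | ∃ a ∈ D.Pi, (u : Module.End ℝ V) = D.refl a}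

/-- The Coxeter group `W`, realized as the group generated by the simple reflections. -/
noncomputable def Wgrp : Subgroup (Module.End ℝ V)ˣ := Subgroup.closure D.simples

/-- The root system. -/
def roots : Set V :=
  {x | ∃ w ∈ D.Wgrp, ∃ a ∈ D.Pi, x = (w : Module.End ℝ V) a}

/-- The positive roots. -/
def posRoots : Set V := D.roots ∩ PLC D.Pi

/-- The negative roots. -/
def negRoots : Set V := {x | -x ∈ D.posRoots}

/-- The length of an element of `W` with respect to the simple reflections. -/
noncomputable def len (w : (Module.End ℝ V)ˣ) : ℕ :=
  sInf {n | ∃ l : List (Module.End ℝ V)ˣ,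
    l.length = n ∧ (∀ u ∈ l, u ∈ D.simples) ∧ l.prod = w}

/-- The depth of a root. -/
noncomputable def dp (x : V) : ℕ :=
  sInf {n | ∃ w ∈ D.Wgrp, D.len w = n ∧ (w : Module.End ℝ V) x ∈ D.negRoots}

/-- Dominance: `x` dominates `y` if every `w ∈ W` making `x` negative makes `y` negative. -/
def dom (x y : V) : Prop :=
  ∀ w ∈ D.Wgrp, (w : Module.End ℝ V) x ∈ D.negRoots → (w : Module.End ℝ V) y ∈ D.negRoots

/-- `D(x)`: the set of positive roots other than `x` dominated by `x`. -/
def DSet (x : V) : Set V := {y | y ∈ D.posRoots ∧ y ≠ x ∧ D.dom x y}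

/-- `D_n`: the set of positive roots dominating exactly `n` other positive roots. -/
def Dn (n : ℕ) : Set V :=
  {x | x ∈ D.posRoots ∧ (D.DSet x).Finite ∧ (D.DSet x).ncard = n}

/-- The set of reflections of `W`. -/
def TSet : Set (Module.End ℝ V)ˣ :=
  {t | ∃ w ∈ D.Wgrp, ∃ s ∈ D.simples, t = w * s * w⁻¹}

/-- `N(w)`: the set of positive roots sent to negative roots by `w`. -/
def NSet (w : (Module.End ℝ V)ˣ) : Set V :=
  {z | z ∈ D.posRoots ∧ (w : Module.End ℝ V) z ∈ D.negRoots}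

/-- `N̄(w)`: the reflections `t` with `ℓ(wt) < ℓ(w)`. -/
def Nbar (w : (Module.End ℝ V)ˣ) : Set (Module.End ℝ V)ˣ :=
  {t | t ∈ D.TSet ∧ D.len (w * t) < D.len w}

/-- The canonical generators of a reflection subgroup `W'`. -/
def canGens (W' : Subgroup (Module.End ℝ V)ˣ) : Set (Module.End ℝ V)ˣ :=
  {t | t ∈ D.TSet ∧ D.Nbar t ∩ (W' : Set (Module.End ℝ V)ˣ) = {t}}

/-- `S(x)`: elements of `W` of minimal length sending `x` into `Π` (inverse-wise). -/
def SSet (x : V) : Set (Module.End ℝ V)ˣ :=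
  {w | w ∈ D.Wgrp ∧ D.len w = D.dp x - 1 ∧ ((w⁻¹ : (Module.End ℝ V)ˣ) : Module.End ℝ V) x ∈ D.Pi}

end CoxeterDatum

theorem subset_PLC (A : Set V) : A ⊆ PLC A := fun a ha =>
  ⟨{a}, fun _ => 1, by simpa using ha, by simp, ⟨a, by simp⟩, by simp⟩

theorem smul_mem_PLC {A : Set V} {v : V} {r : ℝ} (hr : 0 < r) (hv : v ∈ PLC A) :
    r • v ∈ PLC A := by
  obtain ⟨s, c, hsA, hc, ⟨z, hz, hcz⟩, rfl⟩ := hv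
  refine ⟨s, fun x => r * c x, hsA, fun x hx => mul_nonneg hr.le (hc x hx),
    ⟨z, hz, mul_pos hr hcz⟩, ?_⟩
  simp [Finset.smul_sum, mul_smul]

theorem add_mem_PLC {A : Set V} {v w : V} (hv : v ∈ PLC A) (hw : w ∈ PLC A) :
    v + w ∈ PLC A := by
  classical
  obtain ⟨s, c, hsA, hc, ⟨z, hz, hcz⟩, rfl⟩ := hv
  obtain ⟨s', c', hsA', hc', -, rfl⟩ := hw
  have hind : ∀ (t : Finset V) (d : V → ℝ), t ⊆ s ∪ s' →
      ∑ x ∈ s ∪ s', (t : Set V).indicator d x • x = ∑ x ∈ t, d x • x := fun t d ht =>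
    (Finset.sum_congr rfl fun x _ => (Set.indicator_smul_apply_left _ d id x).symm).trans
      (Finset.sum_indicator_subset (fun x => d x • x) ht)
  refine ⟨s ∪ s', fun x => (s : Set V).indicator c x + (s' : Set V).indicator c' x,
    by simpa using And.intro hsA hsA',
    fun x _ => add_nonneg (Set.indicator_nonneg hc x) (Set.indicator_nonneg hc' x),
    ⟨z, Finset.mem_union_left _ hz, ?_⟩, ?_⟩
  · simpa [Set.indicator_of_mem (Finset.mem_coe.2 hz)] using
      add_pos_of_pos_of_nonneg hcz (Set.indicator_nonneg hc' z)
  · simp_rw [add_smul, Finset.sum_add_distrib, hind s c Finset.subset_union_left,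
      hind s' c' Finset.subset_union_right]

theorem smul_add_smul_mem_PLC {A : Set V} {v w : V} {p q : ℝ} (hp : 0 ≤ p) (hq : 0 ≤ q)
    (hpq : 0 < p + q) (hv : v ∈ PLC A) (hw : w ∈ PLC A) : p • v + q • w ∈ PLC A := by
  rcases hp.eq_or_lt with rfl | hp
  · simpa using smul_mem_PLC (by simpa using hpq) hw
  rcases hq.eq_or_lt with rfl | hq
  · simpa using smul_mem_PLC hp hv
  exact add_mem_PLC (smul_mem_PLC hp hv) (smul_mem_PLC hq hw)

section WordLength

variable {G : Type*} [Group G] {S T : Set G} {w v : G}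

noncomputable def wordLength (S : Set G) (w : G) : ℕ :=
  sInf (List.length '' {l : List G | (∀ u ∈ l, u ∈ S) ∧ l.prod = w})

theorem wordLength_le {l : List G} (hl : ∀ u ∈ l, u ∈ S) : wordLength S l.prod ≤ l.length :=
  Nat.sInf_le ⟨l, ⟨hl, rfl⟩, rfl⟩

theorem wordLength_one : wordLength S 1 = 0 :=
  Nat.eq_zero_of_le_zero (wordLength_le (l := []) (by simp))

theorem wordLength_le_one {s : G} (hs : s ∈ S) : wordLength S s ≤ 1 := by
  simpa using wordLength_le (l := [s]) (by simpa using hs)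

theorem exists_word_of_mem_closure (hS : ∀ s ∈ S, s * s = 1) (hw : w ∈ Subgroup.closure S) :
    ∃ l : List G, (∀ u ∈ l, u ∈ S) ∧ l.prod = w := by
  have hfin : ∀ s ∈ S, IsOfFinOrder s := fun s hs =>
    isOfFinOrder_iff_pow_eq_one.2 ⟨2, two_pos, by rw [sq, hS s hs]⟩
  rw [← Subgroup.mem_toSubmonoid, Subgroup.closure_toSubmonoid_of_isOfFinOrder hfin] at hw
  exact Submonoid.exists_list_of_mem_closure hw

theorem exists_reduced_word (hS : ∀ s ∈ S, s * s = 1) (hw : w ∈ Subgroup.closure S) :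
    ∃ l : List G, (∀ u ∈ l, u ∈ S) ∧ l.prod = w ∧ l.length = wordLength S w := by
  obtain ⟨l, hl⟩ := exists_word_of_mem_closure hS hw
  have hne : (List.length '' {l : List G | (∀ u ∈ l, u ∈ S) ∧ l.prod = w}).Nonempty :=
    ⟨l.length, l, hl, rfl⟩
  obtain ⟨l', ⟨hl', rfl⟩, hlen⟩ := Nat.sInf_mem hne
  exact ⟨l', hl', rfl, hlen⟩

theorem eq_one_of_wordLength_eq_zero (hS : ∀ s ∈ S, s * s = 1) (hw : w ∈ Subgroup.closure S)
    (h0 : wordLength S w = 0) : w = 1 := by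
  obtain ⟨l, -, rfl, hl⟩ := exists_reduced_word hS hw
  rw [h0, List.length_eq_zero_iff] at hl
  simp [hl]

theorem wordLength_mul_le (hS : ∀ s ∈ S, s * s = 1) (hw : w ∈ Subgroup.closure S)
    (hv : v ∈ Subgroup.closure S) : wordLength S (w * v) ≤ wordLength S w + wordLength S v := by
  obtain ⟨l₁, h₁, rfl, hl₁⟩ := exists_reduced_word hS hw
  obtain ⟨l₂, h₂, rfl, hl₂⟩ := exists_reduced_word hS hv
  rw [← hl₁, ← hl₂, ← List.length_append, ← List.prod_append]
  exact wordLength_le fun u hu => (List.mem_append.1 hu).elim (h₁ u) (h₂ u)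

theorem wordLength_le_of_subset (hS : ∀ s ∈ S, s * s = 1) (hTS : T ⊆ S)
    (hw : w ∈ Subgroup.closure T) : wordLength S w ≤ wordLength T w := by
  obtain ⟨l, hl, rfl, hlen⟩ := exists_reduced_word (fun t ht => hS t (hTS ht)) hw
  exact hlen ▸ wordLength_le fun u hu => hTS (hl u hu)

theorem exists_wordLength_mul_lt (hS : ∀ s ∈ S, s * s = 1) (hw : w ∈ Subgroup.closure S)
    (hne : w ≠ 1) : ∃ s ∈ S, wordLength S (w * s) < wordLength S w := by
  obtain ⟨l, hl, rfl, hlen⟩ := exists_reduced_word hS hw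
  obtain ⟨l, s, rfl⟩ := l.eq_nil_or_concat'.resolve_left (by rintro rfl; simp at hne)
  have hs : s ∈ S := hl s (by simp)
  refine ⟨s, hs, ?_⟩
  rw [← hlen, List.prod_append, List.prod_singleton, mul_assoc, hS s hs, mul_one]
  exact (wordLength_le fun u hu => hl u (by simp [hu])).trans_lt (by simp)

theorem exists_parabolic_factorization (hS : ∀ s ∈ S, s * s = 1) (hTS : T ⊆ S)
    (hw : w ∈ Subgroup.closure S) :
    ∃ u ∈ Subgroup.closure S, ∃ v ∈ Subgroup.closure T, w = u * v ∧
      wordLength S w = wordLength S u + wordLength T v ∧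
      ∀ r ∈ T, wordLength S u ≤ wordLength S (u * r) := by
  classical
  have hT : ∀ t ∈ T, t * t = 1 := fun t ht => hS t (hTS ht)
  have hex : ∃ k, ∃ u ∈ Subgroup.closure S, ∃ v ∈ Subgroup.closure T, w = u * v ∧
      wordLength S w = wordLength S u + wordLength T v ∧ wordLength S u = k :=
    ⟨_, w, hw, 1, one_mem _, (mul_one w).symm, by rw [wordLength_one, add_zero], rfl⟩
  obtain ⟨u, hu, v, hv, rfl, hsplit, hk⟩ := Nat.find_spec hex
  refine ⟨u, hu, v, hv, rfl, hsplit, fun r hr => ?_⟩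
  by_contra! hlt
  have hur : u * r ∈ Subgroup.closure S := mul_mem hu (Subgroup.subset_closure (hTS hr))
  have hrv : r * v ∈ Subgroup.closure T := mul_mem (Subgroup.subset_closure hr) hv
  have heq : u * v = u * r * (r * v) := by rw [mul_assoc, ← mul_assoc r, hT r hr, one_mul]
  have hle : wordLength S (u * v) ≤ wordLength S (u * r) + wordLength T (r * v) :=
    heq ▸ (wordLength_mul_le hS hur (Subgroup.closure_mono hTS hrv)).trans
      (Nat.add_le_add_left (wordLength_le_of_subset hS hTS hrv) _)
  have hrv_le : wordLength T (r * v) ≤ wordLength T v + 1 :=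
    (wordLength_mul_le hT (Subgroup.subset_closure hr) hv).trans
      (by linarith [wordLength_le_one hr])
  exact Nat.find_min hex (hk ▸ hlt) ⟨u * r, hur, r * v, hrv, heq, by omega, rfl⟩

end WordLength

open CoxeterSystem (alternatingWord alternatingWord_succ alternatingWord_succ')

section AlternatingWord

theorem mem_alternatingWord {B : Type*} {i i' u : B} {k : ℕ}
    (hu : u ∈ alternatingWord i i' k) : u = i ∨ u = i' := by
  induction k generalizing i i' with
  | zero => simp [alternatingWord] at hu
  | succ k ih =>
    rw [alternatingWord_succ, List.concat_eq_append, List.mem_append, List.mem_singleton] at hu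
    exact hu.elim (fun hu => (ih hu).symm) Or.inr

variable {G : Type*} [Group G] {S : Set G} {x y z w : G}

theorem wordLength_prod_alternatingWord_le (hx : x ∈ S) (hy : y ∈ S) (k : ℕ) :
    wordLength S (alternatingWord x y k).prod ≤ k := by
  simpa using wordLength_le fun u hu => (mem_alternatingWord hu).elim (· ▸ hx) (· ▸ hy)

theorem exists_mul_prod_alternatingWord (hx : x * x = 1) (hy : y * y = 1) (hz : z = x ∨ z = y)
    (k : ℕ) : ∃ k' ≤ k + 1, z * (alternatingWord x y k).prod = (alternatingWord x y k').prod ∨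
      z * (alternatingWord x y k).prod = (alternatingWord y x k').prod := by
  have hzz : z * z = 1 := by rcases hz with rfl | rfl <;> assumption
  rcases k with _ | j
  · rcases hz with rfl | rfl
    · exact ⟨1, le_rfl, Or.inr (by simp [alternatingWord])⟩
    · exact ⟨1, le_rfl, Or.inl (by simp [alternatingWord])⟩
  by_cases htop : z = if Even j then y else x
  · refine ⟨j, by omega, Or.inl ?_⟩
    rw [alternatingWord_succ', List.prod_cons, ← mul_assoc, ← htop, hzz, one_mul]
  · refine ⟨j + 2, le_rfl, Or.inl ?_⟩
    rw [alternatingWord_succ' x y (j + 1), List.prod_cons]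
    congr 1
    rcases hz with rfl | rfl <;> by_cases hj : Even j <;> simp_all [Nat.even_add_one]

theorem exists_prod_eq_prod_alternatingWord (hx : x * x = 1) (hy : y * y = 1) {l : List G}
    (hl : ∀ u ∈ l, u = x ∨ u = y) : ∃ k ≤ l.length,
      l.prod = (alternatingWord x y k).prod ∨ l.prod = (alternatingWord y x k).prod := by
  induction l with
  | nil => exact ⟨0, le_rfl, Or.inl rfl⟩
  | cons z l ih =>
    have hz := hl z List.mem_cons_self
    obtain ⟨k, hk, h | h⟩ := ih fun u hu => hl u (List.mem_cons_of_mem z hu)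
    · obtain ⟨k', hk', h'⟩ := exists_mul_prod_alternatingWord hx hy hz k
      exact ⟨k', by simp only [List.length_cons]; omega, by rwa [List.prod_cons, h]⟩
    · obtain ⟨k', hk', h'⟩ := exists_mul_prod_alternatingWord hy hx hz.symm k
      exact ⟨k', by simp only [List.length_cons]; omega, by rw [List.prod_cons, h]; exact h'.symm⟩

theorem eq_prod_alternatingWord_of_wordLength_le (hx : x * x = 1) (hy : y * y = 1)
    (hw : w ∈ Subgroup.closure {x, y}) (hlen : wordLength {x, y} w ≤ wordLength {x, y} (w * x)) :
    w = (alternatingWord x y (wordLength {x, y} w)).prod := by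
  have hS : ∀ s ∈ ({x, y} : Set G), s * s = 1 := by rintro s (rfl | rfl) <;> assumption
  have hxS : x ∈ ({x, y} : Set G) := Or.inl rfl
  have hyS : y ∈ ({x, y} : Set G) := Or.inr rfl
  obtain ⟨l, hl, rfl, hlen_l⟩ := exists_reduced_word hS hw
  obtain ⟨k, hk, h | h⟩ := exists_prod_eq_prod_alternatingWord hx hy hl
  · have := wordLength_prod_alternatingWord_le hxS hyS k
    rw [← h] at this
    rwa [show wordLength {x, y} l.prod = k by omega]
  · have := wordLength_prod_alternatingWord_le hyS hxS k
    rw [← h] at this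
    rcases k with _ | j
    · rw [h, show alternatingWord y x 0 = [] from rfl, List.prod_nil, wordLength_one]
      rfl
    · have hwx : l.prod * x = (alternatingWord x y j).prod := by
        rw [h, alternatingWord_succ, List.prod_concat, mul_assoc, hx, mul_one]
      have := wordLength_prod_alternatingWord_le hxS hyS j
      rw [← hwx] at this
      omega

theorem exists_short_word_of_braid (hx : x * x = 1) {m n : ℕ} (hm : 1 ≤ m)
    (hbraid : (alternatingWord x y m).prod = (alternatingWord y x m).prod) (hmn : m ≤ n) :
    ∃ l : List G, (∀ u ∈ l, u = x ∨ u = y) ∧ l.prod = (alternatingWord x y n).prod * x ∧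
      l.length < n := by
  induction n, hmn using Nat.le_induction with
  | base =>
    obtain ⟨j, rfl⟩ : ∃ j, m = j + 1 := ⟨m - 1, by omega⟩
    refine ⟨alternatingWord x y j, fun u hu => mem_alternatingWord hu, ?_, by simp⟩
    rw [hbraid, alternatingWord_succ, List.prod_concat, mul_assoc, hx, mul_one]
  | succ n _ ih =>
    obtain ⟨l, hl, hprod, hlen⟩ := ih
    refine ⟨(if Even n then y else x) :: l, ?_, ?_, by simpa⟩
    · simp only [List.mem_cons]
      rintro u (rfl | hu)
      · split_ifs <;> simp
      · exact hl u hu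
    · rw [alternatingWord_succ', List.prod_cons, List.prod_cons, hprod, mul_assoc]

end AlternatingWord

namespace Real

theorem sin_nat_mul_pi_div_nonneg {m k : ℕ} (hk : k ≤ m) : 0 ≤ sin (k * (π / m)) := by
  rw [← mul_div_assoc, mul_div_right_comm]
  refine sin_nonneg_of_nonneg_of_le_pi (by positivity) ?_
  exact mul_le_of_le_one_left pi_pos.le (div_le_one_of_le₀ (by exact_mod_cast hk) m.cast_nonneg)

theorem sin_nat_mul_pi_div_pos {m k : ℕ} (hk₀ : 0 < k) (hk : k < m) : 0 < sin (k * (π / m)) := by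
  have hm : (0 : ℝ) < m := by exact_mod_cast hk₀.trans hk
  rw [← mul_div_assoc, mul_div_right_comm]
  refine sin_pos_of_pos_of_lt_pi (by positivity) ?_
  exact mul_lt_of_lt_one_left pi_pos ((div_lt_one hm).2 (by exact_mod_cast hk))

end Real

namespace Polynomial.Chebyshev

theorem U_eval_add_one (γ : ℝ) (n : ℤ) :
    (U ℝ (n + 1)).eval γ = 2 * γ * (U ℝ n).eval γ - (U ℝ (n - 1)).eval γ := by
  simp [U_add_one]

theorem U_eval_sub_one_lt_of_one_le {γ : ℝ} (hγ : 1 ≤ γ) (n : ℕ) :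
    0 ≤ (U ℝ (n - 1)).eval γ ∧ (U ℝ (n - 1)).eval γ < (U ℝ n).eval γ := by
  induction n with
  | zero => simp
  | succ n ih =>
    push_cast
    rw [add_sub_cancel_right, U_eval_add_one]
    constructor <;> nlinarith

theorem sq_ne_one_of_U_eval_eq_zero {γ : ℝ} {n : ℕ} (h : (U ℝ n).eval γ = 0) : γ ^ 2 ≠ 1 := by
  intro hγ
  rcases sq_eq_one_iff.1 hγ with rfl | rfl
  · rw [U_eval_one] at h
    norm_cast at h
  · rw [U_eval_neg_one] at h
    simp at h
    norm_cast at h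

theorem U_eval_sub_one_cos_pi_div {m : ℕ} (hm : 2 ≤ m) (k : ℤ) :
    (U ℝ (k - 1)).eval (cos (π / m)) = sin (k * (π / m)) / sin (π / m) := by
  have hsin : 0 < sin (π / m) := by simpa using sin_nat_mul_pi_div_pos one_pos hm
  rw [eq_div_iff hsin.ne', U_real_cos]
  push_cast
  ring_nf

theorem U_eval_cos_pi_div_nonneg {m : ℕ} (hm : 2 ≤ m) {n : ℕ} (hn : n < m) :
    0 ≤ (U ℝ (n - 1)).eval (cos (π / m)) ∧ 0 ≤ (U ℝ n).eval (cos (π / m)) ∧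
      0 < (U ℝ (n - 1)).eval (cos (π / m)) + (U ℝ n).eval (cos (π / m)) := by
  have hsin : 0 < sin (π / m) := by simpa using sin_nat_mul_pi_div_pos one_pos hm
  have hUn : (U ℝ n).eval (cos (π / m)) = sin ((n + 1 : ℕ) * (π / m)) / sin (π / m) := by
    simpa using U_eval_sub_one_cos_pi_div hm (n + 1)
  rw [U_eval_sub_one_cos_pi_div hm, hUn]
  have hP := div_nonneg (sin_nat_mul_pi_div_nonneg hn) hsin.le
  refine ⟨div_nonneg (sin_nat_mul_pi_div_nonneg hn.le) hsin.le, hP, ?_⟩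
  rcases n with _ | n
  · simp [hsin.ne']
  · exact add_pos_of_pos_of_nonneg (div_pos (sin_nat_mul_pi_div_pos n.succ_pos hn) hsin) hP

theorem U_eval_sub_one_cos_pi_div_self {m : ℕ} (hm : 2 ≤ m) :
    (U ℝ (m - 1)).eval (cos (π / m)) = 0 := by
  have hmθ : ((m : ℤ) : ℝ) * (π / m) = π := by push_cast; field_simp
  rw [U_eval_sub_one_cos_pi_div hm, hmθ, sin_pi, zero_div]

end Polynomial.Chebyshev

open Polynomial.Chebyshev

namespace CoxeterDatum

variable (D : CoxeterDatum V) {a b : V}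

@[simp] theorem refl_apply (a x : V) : D.refl a x = x - (2 * D.B x a) • a := rfl

theorem refl_apply_self (ha : D.B a a = 1) : D.refl a a = -a := by
  rw [refl_apply, ha]; module

theorem refl_mul_self (ha : D.B a a = 1) : D.refl a * D.refl a = 1 := by
  ext x
  simp only [Module.End.mul_apply, refl_apply, map_sub, map_smul, ha, Module.End.one_apply]
  module

theorem refl_smul_add_smul {γ : ℝ} (hb : D.B b b = 1) (hab : D.B a b = -γ) (p q : ℝ) :
    D.refl b (p • a + q • b) = p • a + (2 * γ * p - q) • b := by
  simp only [refl_apply, map_add, map_smul, hb, hab]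
  module

/-- `γ ^ 2 ≠ 1` says that the Gram matrix of `a, b` is invertible. -/
theorem exists_eq_smul_add_smul_add_fixed {γ : ℝ} (ha : D.B a a = 1) (hb : D.B b b = 1)
    (hab : D.B a b = -γ) (hba : D.B b a = -γ) (hγ : γ ^ 2 ≠ 1) (x : V) :
    ∃ α β : ℝ, ∃ y : V, x = α • a + β • b + y ∧ D.refl a y = y ∧ D.refl b y = y := by
  have hd : 1 - γ ^ 2 ≠ 0 := sub_ne_zero.2 (Ne.symm hγ)
  refine ⟨(D.B x a + γ * D.B x b) / (1 - γ ^ 2), (D.B x b + γ * D.B x a) / (1 - γ ^ 2), _,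
    (add_sub_cancel _ x).symm, ?_, ?_⟩ <;>
  · rw [refl_apply, sub_eq_self, smul_eq_zero, mul_eq_zero]
    left; right
    simp only [map_sub, map_add, map_smul, LinearMap.sub_apply, LinearMap.add_apply,
      LinearMap.smul_apply, smul_eq_mul, ha, hb, hab, hba]
    field_simp
    ring

noncomputable def simpleRefl (ha : a ∈ D.Pi) : (Module.End ℝ V)ˣ where
  val := D.refl a
  inv := D.refl a
  val_inv := D.refl_mul_self (D.norm_one a ha)
  inv_val := D.refl_mul_self (D.norm_one a ha)

@[simp] theorem coe_simpleRefl (ha : a ∈ D.Pi) :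
    (D.simpleRefl ha : Module.End ℝ V) = D.refl a := rfl

theorem simpleRefl_mem_simples (ha : a ∈ D.Pi) : D.simpleRefl ha ∈ D.simples := ⟨a, ha, rfl⟩

theorem simpleRefl_mul_self (ha : a ∈ D.Pi) : D.simpleRefl ha * D.simpleRefl ha = 1 :=
  Units.ext (D.refl_mul_self (D.norm_one a ha))

theorem exists_eq_simpleRefl {u : (Module.End ℝ V)ˣ} (hu : u ∈ D.simples) :
    ∃ a, ∃ ha : a ∈ D.Pi, u = D.simpleRefl ha := by
  obtain ⟨a, ha, hu⟩ := hu
  exact ⟨a, ha, Units.ext hu⟩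

theorem mul_self_eq_one_of_mem_simples : ∀ u ∈ D.simples, u * u = 1 := by
  intro u hu
  obtain ⟨a, ha, rfl⟩ := D.exists_eq_simpleRefl hu
  exact D.simpleRefl_mul_self ha

theorem mul_simpleRefl_apply_self (w : (Module.End ℝ V)ˣ) (ha : a ∈ D.Pi) :
    ((w * D.simpleRefl ha : (Module.End ℝ V)ˣ) : Module.End ℝ V) a = -(w : Module.End ℝ V) a := by
  rw [Units.val_mul, Module.End.mul_apply, coe_simpleRefl, D.refl_apply_self (D.norm_one a ha),
    map_neg]

theorem list_prod_apply_eq_self {l : List (Module.End ℝ V)ˣ} {y : V}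
    (h : ∀ u ∈ l, (u : Module.End ℝ V) y = y) : (l.prod : Module.End ℝ V) y = y := by
  induction l with
  | nil => rfl
  | cons u l ih =>
    rw [List.prod_cons, Units.val_mul, Module.End.mul_apply,
      ih fun v hv => h v (List.mem_cons_of_mem u hv), h u List.mem_cons_self]

section Dihedral

variable {γ : ℝ} (ha : a ∈ D.Pi) (hb : b ∈ D.Pi) (hab : D.B a b = -γ)
include ha hb hab

theorem prod_alternatingWord_apply (k : ℕ) :
    ((alternatingWord (D.simpleRefl ha) (D.simpleRefl hb) k).prod : Module.End ℝ V) a =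
      if Even k then (U ℝ k).eval γ • a + (U ℝ (k - 1)).eval γ • b
      else (U ℝ (k - 1)).eval γ • a + (U ℝ k).eval γ • b := by
  have hba : D.B b a = -γ := D.symm b hb a ha ▸ hab
  induction k with
  | zero => simp [alternatingWord]
  | succ k ih =>
    have hrec := U_eval_add_one γ k
    rw [alternatingWord_succ', List.prod_cons, Units.val_mul, Module.End.mul_apply, ih]
    by_cases hk : Even k
    · rw [if_pos hk, if_pos hk, if_neg (by simpa [Nat.even_add_one] using hk), coe_simpleRefl,
        D.refl_smul_add_smul (D.norm_one b hb) hab]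
      push_cast
      rw [add_sub_cancel_right, hrec]
    · rw [if_neg hk, if_neg hk, if_pos (by simpa [Nat.even_add_one] using hk), coe_simpleRefl,
        add_comm, D.refl_smul_add_smul (D.norm_one a ha) hba]
      push_cast
      rw [add_sub_cancel_right, hrec, add_comm]

theorem prod_alternatingWord_apply_eq_swap {m : ℕ} (hU : (U ℝ m).eval γ = 0) :
    ((alternatingWord (D.simpleRefl ha) (D.simpleRefl hb) (m + 1)).prod : Module.End ℝ V) a =
      ((alternatingWord (D.simpleRefl hb) (D.simpleRefl ha) (m + 1)).prod : Module.End ℝ V) a := by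
  rw [alternatingWord_succ (D.simpleRefl hb), List.prod_concat, Units.val_mul,
    Module.End.mul_apply, coe_simpleRefl, D.refl_apply_self (D.norm_one a ha), map_neg,
    D.prod_alternatingWord_apply ha hb hab, D.prod_alternatingWord_apply ha hb hab]
  push_cast
  rw [add_sub_cancel_right, U_eval_add_one, hU]
  by_cases hm : Even m
  · rw [if_neg (by simpa [Nat.even_add_one] using hm), if_pos hm]
    module
  · rw [if_pos (by simpa [Nat.even_add_one] using hm), if_neg hm]
    module

/-- Both sides agree on `a` and `b`, since a zero of `U_m` forces `U_{m+1} = -U_{m-1}`, and both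
fix the common fixed space of the two reflections. -/
theorem prod_alternatingWord_eq_swap {m : ℕ} (hU : (U ℝ m).eval γ = 0) :
    (alternatingWord (D.simpleRefl ha) (D.simpleRefl hb) (m + 1)).prod =
      (alternatingWord (D.simpleRefl hb) (D.simpleRefl ha) (m + 1)).prod := by
  have hba : D.B b a = -γ := D.symm b hb a ha ▸ hab
  refine Units.ext (LinearMap.ext fun x => ?_)
  obtain ⟨α, β, y, rfl, hya, hyb⟩ := D.exists_eq_smul_add_smul_add_fixed (D.norm_one a ha)
    (D.norm_one b hb) hab hba (sq_ne_one_of_U_eval_eq_zero hU) x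
  have hfix : ∀ u : (Module.End ℝ V)ˣ, u = D.simpleRefl ha ∨ u = D.simpleRefl hb →
      (u : Module.End ℝ V) y = y := by
    rintro u (rfl | rfl)
    exacts [hya, hyb]
  rw [map_add, map_add, map_add, map_add, map_smul, map_smul, map_smul, map_smul,
    D.prod_alternatingWord_apply_eq_swap ha hb hab hU,
    ← D.prod_alternatingWord_apply_eq_swap hb ha hba hU,
    list_prod_apply_eq_self fun u hu => hfix u (mem_alternatingWord hu),
    list_prod_apply_eq_self fun u hu => hfix u (mem_alternatingWord hu).symm]

end Dihedral

theorem exists_apply_eq_smul_add_smul_of_wordLength_le (ha : a ∈ D.Pi) (hb : b ∈ D.Pi)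
    (hab : a ≠ b) {v : (Module.End ℝ V)ˣ}
    (hv : v ∈ Subgroup.closure {D.simpleRefl ha, D.simpleRefl hb})
    (hlen : wordLength {D.simpleRefl ha, D.simpleRefl hb} v ≤
      wordLength {D.simpleRefl ha, D.simpleRefl hb} (v * D.simpleRefl ha)) :
    ∃ p q : ℝ, 0 ≤ p ∧ 0 ≤ q ∧ 0 < p + q ∧ (v : Module.End ℝ V) a = p • a + q • b := by
  set n := wordLength {D.simpleRefl ha, D.simpleRefl hb} v
  have hv_eq := eq_prod_alternatingWord_of_wordLength_le (D.simpleRefl_mul_self ha)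
    (D.simpleRefl_mul_self hb) hv hlen
  set γ := -D.B a b
  have hγ : D.B a b = -γ := (neg_neg _).symm
  have hcoef : 0 ≤ (U ℝ (n - 1)).eval γ ∧ 0 ≤ (U ℝ n).eval γ ∧
      0 < (U ℝ (n - 1)).eval γ + (U ℝ n).eval γ := by
    rcases D.offdiag a ha b hb hab with ⟨m, hm, hcos⟩ | hle
    · have hγm : γ = cos (π / m) := by simp [γ, hcos]
      -- `v` is reduced, so the braid relation of length `m` makes it shorter than `m`.
      have hnm : n < m := by
        by_contra! hmn
        obtain ⟨j, rfl⟩ : ∃ j, m = j + 1 := ⟨m - 1, by omega⟩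
        have hU : (U ℝ j).eval γ = 0 := by
          simpa [hγm] using U_eval_sub_one_cos_pi_div_self hm
        obtain ⟨l, hl, hprod, hlt⟩ := exists_short_word_of_braid (D.simpleRefl_mul_self ha)
          (by omega) (D.prod_alternatingWord_eq_swap ha hb hγ hU) hmn
        have := wordLength_le (S := {D.simpleRefl ha, D.simpleRefl hb}) hl
        rw [hprod, ← hv_eq] at this
        omega
      rw [hγm]
      exact U_eval_cos_pi_div_nonneg hm hnm
    · obtain ⟨h0, hlt⟩ := U_eval_sub_one_lt_of_one_le (by linarith : 1 ≤ γ) n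
      exact ⟨h0, by linarith, by linarith⟩
  obtain ⟨hQ, hP, hPQ⟩ := hcoef
  rw [hv_eq, D.prod_alternatingWord_apply ha hb hγ]
  split_ifs
  · exact ⟨_, _, hP, hQ, by linarith, rfl⟩
  · exact ⟨_, _, hQ, hP, hPQ, rfl⟩

theorem apply_mem_PLC_of_wordLength_le {w : (Module.End ℝ V)ˣ} (hw : w ∈ D.Wgrp) (ha : a ∈ D.Pi)
    (hlen : wordLength D.simples w ≤ wordLength D.simples (w * D.simpleRefl ha)) :
    (w : Module.End ℝ V) a ∈ PLC D.Pi := by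
  induction hn : wordLength D.simples w using Nat.strong_induction_on generalizing w a with
  | _ n ih =>
  by_cases hw1 : w = 1
  · subst hw1
    exact subset_PLC _ ha
  have hS := D.mul_self_eq_one_of_mem_simples
  obtain ⟨r, hr, hwr⟩ := exists_wordLength_mul_lt hS hw hw1
  obtain ⟨b, hb, rfl⟩ := D.exists_eq_simpleRefl hr
  have hab : a ≠ b := by
    rintro rfl
    omega
  set T : Set (Module.End ℝ V)ˣ := {D.simpleRefl ha, D.simpleRefl hb}
  have hTS : T ⊆ D.simples := by
    rintro _ (rfl | rfl)
    exacts [D.simpleRefl_mem_simples ha, D.simpleRefl_mem_simples hb]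
  obtain ⟨u, hu, v, hv, rfl, hsplit, hmin⟩ := exists_parabolic_factorization hS hTS hw
  have hv1 : v ≠ 1 := by
    rintro rfl
    have := hmin _ (Or.inr rfl)
    rw [mul_one] at hwr
    omega
  have hv0 : wordLength T v ≠ 0 := fun h =>
    hv1 (eq_one_of_wordLength_eq_zero (fun t ht => hS t (hTS ht)) hv h)
  have hvs_mem : v * D.simpleRefl ha ∈ Subgroup.closure T :=
    mul_mem hv (Subgroup.subset_closure (Or.inl rfl))
  have hvs : wordLength T v ≤ wordLength T (v * D.simpleRefl ha) := by
    have := (wordLength_mul_le hS hu (Subgroup.closure_mono hTS hvs_mem)).trans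
      (Nat.add_le_add_left (wordLength_le_of_subset hS hTS hvs_mem) _)
    rw [← mul_assoc] at this
    omega
  obtain ⟨p, q, hp, hq, hpq, hva⟩ :=
    D.exists_apply_eq_smul_add_smul_of_wordLength_le ha hb hab hv hvs
  have hua := ih _ (by omega) hu ha (hmin _ (Or.inl rfl)) rfl
  have hub := ih _ (by omega) hu hb (hmin _ (Or.inr rfl)) rfl
  rw [Units.val_mul, Module.End.mul_apply, hva, map_add, map_smul, map_smul]
  exact smul_add_smul_mem_PLC hp hq hpq hua hub

theorem neg_mem_roots {x : V} (hx : x ∈ D.roots) : -x ∈ D.roots := by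
  obtain ⟨w, hw, a, ha, rfl⟩ := hx
  exact ⟨w * D.simpleRefl ha, mul_mem hw (Subgroup.subset_closure (D.simpleRefl_mem_simples ha)),
    a, ha, (D.mul_simpleRefl_apply_self w ha).symm⟩

theorem mem_PLC_or_neg_mem_PLC {x : V} (hx : x ∈ D.roots) : x ∈ PLC D.Pi ∨ -x ∈ PLC D.Pi := by
  obtain ⟨w, hw, a, ha, rfl⟩ := hx
  rcases le_or_gt (wordLength D.simples w) (wordLength D.simples (w * D.simpleRefl ha)) with h | h
  · exact Or.inl (D.apply_mem_PLC_of_wordLength_le hw ha h)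
  · refine Or.inr (D.mul_simpleRefl_apply_self w ha ▸ D.apply_mem_PLC_of_wordLength_le
      (mul_mem hw (Subgroup.subset_closure (D.simpleRefl_mem_simples ha))) ha ?_)
    rw [mul_assoc, D.simpleRefl_mul_self, mul_one]
    exact h.le

end CoxeterDatum

/-- Proposition 1.5(ii): `Φ = Φ⁺ ⊎ Φ⁻`. -/
theorem roots_eq_pos_disjUnion_neg (D : CoxeterDatum V) :
    D.roots = D.posRoots ∪ D.negRoots ∧ Disjoint D.posRoots D.negRoots := by
  refine ⟨Set.Subset.antisymm (fun x hx => ?_) ?_, Set.disjoint_left.2 ?_⟩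
  · rcases D.mem_PLC_or_neg_mem_PLC hx with h | h
    exacts [Or.inl ⟨hx, h⟩, Or.inr ⟨D.neg_mem_roots hx, h⟩]
  · rintro x (hx | hx)
    exacts [hx.1, neg_neg x ▸ D.neg_mem_roots hx.1]
  · rintro x ⟨-, hx⟩ ⟨-, hnx⟩
    exact D.zero_not_plc (add_neg_cancel x ▸ add_mem_PLC hx hnx)
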